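/- Let X = (X^1, X^2) be a continuous path of bounded variation on [0,T] with a strict lead-lag structure: there is a partition 0 = t_0 < t_1 < ... < t_{2N} = T such that X^1_{t_{2k}} = X^2_{t_{2k}} =: S_k for all k, on each lead interval [t_{2k-2}, t_{2k-1}] the coordinate X^1 moves from S_{k-1} to S_k while X^2 is constant at S_{k-1}, on each lag interval [t_{2k-1}, t_{2k}] the coordinate X^2 moves from S_{k-1} to S_k while X^1 is constant at S_k, and S_k ≠ S_{k-1} for all k. Then the signed area A(X) = ∫_0^T X^1 dX^2 − ∫_0^T X^2 dX^1 satisfies A(X) = Σ_{k=1}^N (S_k − S_{k-1})^2 > 0. -/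

import Mathlib

open Set

/-- `I` is the Riemann–Stieltjes integral `∫_a^b f dg`, as a limit of
Riemann–Stieltjes sums over tagged partitions with mesh tending to zero. -/
def RSIntegralOn (f g : ℝ → ℝ) (a b I : ℝ) : Prop :=
  ∀ ε : ℝ, 0 < ε → ∃ δ : ℝ, 0 < δ ∧ ∀ (n : ℕ) (t ξ : ℕ → ℝ),
    0 < n → t 0 = a → t n = b →
    (∀ i < n, t i ≤ t (i + 1) ∧ t (i + 1) - t i < δ ∧ t i ≤ ξ i ∧ ξ i ≤ t (i + 1)) →
    |(∑ i ∈ Finset.range n, f (ξ i) * (g (t (i + 1)) - g (t i))) - I| < ε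

/-!
On every piece of the lead-lag partition one of the two coordinates is constant. Hence a
Riemann–Stieltjes sum over a refinement of the partition, tagged at left endpoints, collapses
piece by piece to the left-point sum over the partition itself; uniform refinements have
arbitrarily small mesh, so this left-point sum is the integral. At the partition points the path
visits `(S_{k-1}, S_{k-1})`, `(S_k, S_{k-1})`, `(S_k, S_k)`, and the discrete signed area of one
lead step followed by one lag step is `(S_k - S_{k-1})²`.
-/

theorem Finset.sum_range_mul_eq_sum_sum {β : Type*} [AddCommMonoid β] (f : ℕ → β) (n m : ℕ) :
    ∑ i ∈ range (n * m), f i = ∑ j ∈ range n, ∑ r ∈ range m, f (j * m + r) := by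
  induction n with
  | zero => simp
  | succ n ih => rw [Nat.succ_mul, Finset.sum_range_add, ih, Finset.sum_range_succ]

noncomputable def uniformRefinement (t : ℕ → ℝ) (m i : ℕ) : ℝ :=
  t (i / m) + (i % m : ℕ) / m * (t (i / m + 1) - t (i / m))

section uniformRefinement

variable {t : ℕ → ℝ} {m : ℕ}

theorem uniformRefinement_mul (hm : 0 < m) (j : ℕ) : uniformRefinement t m (j * m) = t j := by
  simp [uniformRefinement, Nat.mul_div_cancel _ hm, Nat.mul_mod_left]

theorem uniformRefinement_mul_add (hm : 0 < m) (j : ℕ) {r : ℕ} (hr : r ≤ m) :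
    uniformRefinement t m (j * m + r) = t j + r / m * (t (j + 1) - t j) := by
  obtain hr | rfl := hr.lt_or_eq
  · have hdiv : (j * m + r) / m = j := Nat.div_eq_of_lt_le (by lia) (by rw [Nat.succ_mul]; lia)
    have hmod : (j * m + r) % m = r := by rw [Nat.mul_comm, Nat.mul_add_mod, Nat.mod_eq_of_lt hr]
    rw [uniformRefinement, hdiv, hmod]
  · rw [← Nat.succ_mul, uniformRefinement_mul hm, div_self (by positivity)]
    ring

theorem uniformRefinement_mul_add_mem (hm : 0 < m) {j r : ℕ} (hr : r ≤ m) (ht : t j ≤ t (j + 1)) :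
    uniformRefinement t m (j * m + r) ∈ Icc (t j) (t (j + 1)) := by
  have hs0 : (0 : ℝ) ≤ r / m := by positivity
  have hs1 : (r : ℝ) / m ≤ 1 := div_le_one_of_le₀ (by exact_mod_cast hr) (by positivity)
  rw [uniformRefinement_mul_add hm j hr]
  constructor <;> nlinarith

theorem uniformRefinement_succ_sub (hm : 0 < m) (i : ℕ) :
    uniformRefinement t m (i + 1) - uniformRefinement t m i = (t (i / m + 1) - t (i / m)) / m := by
  have hi : i = i / m * m + i % m := (Nat.div_add_mod' i m).symm
  have hr : i % m < m := Nat.mod_lt i hm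
  rw [hi, add_assoc, uniformRefinement_mul_add hm _ hr, uniformRefinement_mul_add hm _ hr.le,
    ← hi]
  push_cast
  ring

end uniformRefinement

section RiemannStieltjes

variable {f g : ℝ → ℝ} {t : ℕ → ℝ}

theorem sum_uniformRefinement_block {m j : ℕ} (hm : 0 < m) (ht : t j ≤ t (j + 1))
    (hconst : (∀ u ∈ Icc (t j) (t (j + 1)), f u = f (t j)) ∨
      ∀ u ∈ Icc (t j) (t (j + 1)), g u = g (t j)) :
    ∑ r ∈ Finset.range m, f (uniformRefinement t m (j * m + r)) *
        (g (uniformRefinement t m (j * m + r + 1)) - g (uniformRefinement t m (j * m + r))) =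
      f (t j) * (g (t (j + 1)) - g (t j)) := by
  have hmem : ∀ r ≤ m, uniformRefinement t m (j * m + r) ∈ Icc (t j) (t (j + 1)) :=
    fun r hr => uniformRefinement_mul_add_mem hm hr ht
  rcases hconst with hf | hg
  · have hG := Finset.sum_range_sub (fun r => g (uniformRefinement t m (j * m + r))) m
    simp only [add_zero, ← Nat.succ_mul, uniformRefinement_mul hm] at hG
    rw [← hG, Finset.mul_sum]
    refine Finset.sum_congr rfl fun r hr => ?_
    rw [hf _ (hmem r (Finset.mem_range.1 hr).le)]
    rfl
  · rw [hg _ ⟨ht, le_rfl⟩, sub_self, mul_zero]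
    refine Finset.sum_eq_zero fun r hr => ?_
    have hr : r < m := Finset.mem_range.1 hr
    have hsucc : uniformRefinement t m (j * m + r + 1) ∈ Icc (t j) (t (j + 1)) := hmem (r + 1) hr
    rw [hg _ (hmem r hr.le), hg _ hsucc, sub_self, mul_zero]

theorem RSIntegralOn.eq_sum_of_const_or_const {a b I : ℝ} (hI : RSIntegralOn f g a b I)
    {M : ℕ} (hM : 0 < M) (ht0 : t 0 = a) (htM : t M = b) (hmono : ∀ j < M, t j ≤ t (j + 1))
    (hconst : ∀ j < M, (∀ u ∈ Icc (t j) (t (j + 1)), f u = f (t j)) ∨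
      ∀ u ∈ Icc (t j) (t (j + 1)), g u = g (t j)) :
    I = ∑ j ∈ Finset.range M, f (t j) * (g (t (j + 1)) - g (t j)) := by
  refine eq_of_abs_sub_le_all fun ε hε => ?_
  obtain ⟨δ, hδ, hRS⟩ := hI ε hε
  obtain ⟨m, hm, hmesh⟩ : ∃ m : ℕ, 0 < m ∧ ∀ j ∈ Finset.range M, (t (j + 1) - t j) / m < δ :=
    ((Filter.eventually_gt_atTop 0).and <| (Finset.range M).eventually_all.2 fun j _ =>
      (tendsto_const_div_atTop_nhds_zero_nat _).eventually (gt_mem_nhds hδ)).exists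
  set q := uniformRefinement t m
  have hpartition : ∀ i < M * m, q i ≤ q (i + 1) ∧ q (i + 1) - q i < δ ∧ q i ≤ q i ∧
      q i ≤ q (i + 1) := by
    intro i hi
    have hj : i / m < M := (Nat.div_lt_iff_lt_mul hm).2 hi
    have hstep : q (i + 1) - q i = (t (i / m + 1) - t (i / m)) / m :=
      uniformRefinement_succ_sub hm i
    have hle : q i ≤ q (i + 1) := by
      rw [← sub_nonneg, hstep]
      exact div_nonneg (sub_nonneg.2 (hmono _ hj)) (Nat.cast_nonneg m)
    exact ⟨hle, hstep ▸ hmesh _ (Finset.mem_range.2 hj), le_rfl, hle⟩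
  have hsum : ∑ i ∈ Finset.range (M * m), f (q i) * (g (q (i + 1)) - g (q i)) =
      ∑ j ∈ Finset.range M, f (t j) * (g (t (j + 1)) - g (t j)) := by
    rw [Finset.sum_range_mul_eq_sum_sum]
    refine Finset.sum_congr rfl fun j hj => ?_
    have hj : j < M := Finset.mem_range.1 hj
    exact sum_uniformRefinement_block hm (hmono j hj) (hconst j hj)
  have hq0 : q 0 = a := by simpa [ht0] using uniformRefinement_mul (t := t) hm 0
  have hqM : q (M * m) = b := by rw [← htM]; exact uniformRefinement_mul hm M
  rw [abs_sub_comm, ← hsum]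
  exact (hRS _ q q (Nat.mul_pos hM hm) hq0 hqM hpartition).le

end RiemannStieltjes

theorem sum_signedArea_increments_of_leadLag {x y S : ℕ → ℝ} {N : ℕ}
    (hsync : ∀ k ≤ N, x (2 * k) = S k ∧ y (2 * k) = S k)
    (hlead : ∀ k < N, x (2 * k + 1) = S (k + 1) ∧ y (2 * k + 1) = S k) :
    ∑ j ∈ Finset.range (2 * N), (x j * (y (j + 1) - y j) - y j * (x (j + 1) - x j)) =
      ∑ k ∈ Finset.Icc 1 N, (S k - S (k - 1)) ^ 2 := by
  induction N with
  | zero => simp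
  | succ N ih =>
    obtain ⟨hx0, hy0⟩ := hsync N (by lia)
    obtain ⟨hx1, hy1⟩ := hlead N (by lia)
    obtain ⟨hx2, hy2⟩ := hsync (N + 1) le_rfl
    rw [show 2 * (N + 1) = 2 * N + 1 + 1 by ring] at hx2 hy2 ⊢
    rw [Finset.sum_range_succ, Finset.sum_range_succ, Finset.sum_Icc_succ_top (by lia),
      ih (fun k hk => hsync k (by lia)) (fun k hk => hlead k (by lia)),
      hx0, hy0, hx1, hy1, hx2, hy2, Nat.add_sub_cancel]
    ring

theorem leadLag_signed_area_general
    (T : ℝ) (X1 X2 : ℝ → ℝ)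
    (N : ℕ) (hN : 1 ≤ N) (t : ℕ → ℝ) (S : ℕ → ℝ)
    (ht0 : t 0 = 0) (htN : t (2 * N) = T)
    (hmono : ∀ i < 2 * N, t i < t (i + 1))
    (hsync : ∀ k ≤ N, X1 (t (2 * k)) = S k ∧ X2 (t (2 * k)) = S k)
    (hlead : ∀ k, 1 ≤ k → k ≤ N →
      (∀ u ∈ Icc (t (2 * k - 2)) (t (2 * k - 1)), X2 u = S (k - 1)) ∧
        X1 (t (2 * k - 1)) = S k)
    (hlag : ∀ k, 1 ≤ k → k ≤ N →
      ∀ u ∈ Icc (t (2 * k - 1)) (t (2 * k)), X1 u = S k)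
    (hstrict : ∀ k, 1 ≤ k → k ≤ N → S k ≠ S (k - 1))
    (I1 I2 : ℝ)
    (hI1 : RSIntegralOn X1 X2 0 T I1) (hI2 : RSIntegralOn X2 X1 0 T I2) :
    I1 - I2 = ∑ k ∈ Finset.Icc 1 N, (S k - S (k - 1)) ^ 2 ∧ 0 < I1 - I2 := by
  have hle : ∀ j < 2 * N, t j ≤ t (j + 1) := fun j hj => (hmono j hj).le
  have hleadAt : ∀ k < N, (∀ u ∈ Icc (t (2 * k)) (t (2 * k + 1)), X2 u = S k) ∧
      X1 (t (2 * k + 1)) = S (k + 1) := fun k hk => by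
    simpa [Nat.mul_succ] using hlead (k + 1) (by lia) (by lia)
  have hlagAt : ∀ k < N, ∀ u ∈ Icc (t (2 * k + 1)) (t (2 * k + 1 + 1)), X1 u = S (k + 1) :=
    fun k hk => by simpa [Nat.mul_succ] using hlag (k + 1) (by lia) (by lia)
  have hconst : ∀ j < 2 * N, (∀ u ∈ Icc (t j) (t (j + 1)), X1 u = X1 (t j)) ∨
      ∀ u ∈ Icc (t j) (t (j + 1)), X2 u = X2 (t j) := by
    intro j hj
    obtain ⟨k, rfl | rfl⟩ := Nat.even_or_odd' j
    · have hX2 := (hleadAt k (by lia)).1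
      exact .inr fun u hu => by rw [hX2 u hu, hX2 _ ⟨le_rfl, hle _ hj⟩]
    · have hX1 := hlagAt k (by lia)
      exact .inl fun u hu => by rw [hX1 u hu, hX1 _ ⟨le_rfl, hle _ hj⟩]
  have hI1_eq := hI1.eq_sum_of_const_or_const (by lia) ht0 htN hle hconst
  have hI2_eq := hI2.eq_sum_of_const_or_const (by lia) ht0 htN hle fun j hj => (hconst j hj).symm
  have harea : I1 - I2 = ∑ k ∈ Finset.Icc 1 N, (S k - S (k - 1)) ^ 2 := by
    rw [hI1_eq, hI2_eq, ← Finset.sum_sub_distrib]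
    exact sum_signedArea_increments_of_leadLag (x := fun j => X1 (t j)) (y := fun j => X2 (t j))
      hsync fun k hk => ⟨(hleadAt k hk).2, (hleadAt k hk).1 _ ⟨hle (2 * k) (by lia), le_rfl⟩⟩
  refine ⟨harea, harea ▸ Finset.sum_pos (fun k hk => ?_) (Finset.nonempty_Icc.2 hN)⟩
  have hk := Finset.mem_Icc.1 hk
  have := sub_ne_zero.2 (hstrict k hk.1 hk.2)
  positivity

/-- Strict lead-lag implies the signed area equals `∑ (S_k − S_{k-1})² > 0`. -/
theorem leadLag_signed_area
    (T : ℝ) (hT : 0 < T) (X1 X2 : ℝ → ℝ)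
    (hc1 : ContinuousOn X1 (Icc 0 T)) (hc2 : ContinuousOn X2 (Icc 0 T))
    (hbv1 : BoundedVariationOn X1 (Icc 0 T)) (hbv2 : BoundedVariationOn X2 (Icc 0 T))
    (N : ℕ) (hN : 1 ≤ N) (t : ℕ → ℝ) (S : ℕ → ℝ)
    (ht0 : t 0 = 0) (htN : t (2 * N) = T)
    (hmono : ∀ i < 2 * N, t i < t (i + 1))
    (hsync : ∀ k ≤ N, X1 (t (2 * k)) = S k ∧ X2 (t (2 * k)) = S k)
    (hlead : ∀ k, 1 ≤ k → k ≤ N →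
      (∀ u ∈ Icc (t (2 * k - 2)) (t (2 * k - 1)), X2 u = S (k - 1)) ∧
        X1 (t (2 * k - 1)) = S k)
    (hlag : ∀ k, 1 ≤ k → k ≤ N →
      ∀ u ∈ Icc (t (2 * k - 1)) (t (2 * k)), X1 u = S k)
    (hstrict : ∀ k, 1 ≤ k → k ≤ N → S k ≠ S (k - 1))
    (I1 I2 : ℝ)
    (hI1 : RSIntegralOn X1 X2 0 T I1) (hI2 : RSIntegralOn X2 X1 0 T I2) :
    I1 - I2 = ∑ k ∈ Finset.Icc 1 N, (S k - S (k - 1)) ^ 2 ∧ 0 < I1 - I2 :=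
  leadLag_signed_area_general T X1 X2 N hN t S ht0 htN hmono hsync hlead hlag hstrict I1 I2 hI1 hI2
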